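/- Every door gadget can simulate some fully directed door: given any door that can simulate a diode (which holds for every mixed and every undirected door), wiring each tunnel of the door through a diode at each end (all diodes on a tunnel pointing the same way) yields a system whose external behavior realizes exactly the transitive closure of the directed door obtained by directing each tunnel of the original door. -/

import Mathlib

/-- A 1-player gadget: a finite set of states, a finite set of locations,
and a set of traversals between state–location pairs. -/
structure Gadget where
  State : Type
  Loc : Type
  stateFin : Fintype State
  locFin : Fintype Loc
  trav : (State × Loc) → (State × Loc) → Prop

open Classical in
/-- Update the state of one gadget instance in a global state. -/
noncomputable def updState {ι St : Type} (σg : ι → St) (i : ι) (s : St) : ι → St :=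
  fun j => if j = i then s else σg j

/-- A system of copies of the gadget `G`: a finite collection of instances together with
symmetric connections (pairings of locations) along which the agent moves freely. -/
structure System (G : Gadget) where
  ι : Type
  instFin : Fintype ι
  conn : (ι × G.Loc) → (ι × G.Loc) → Prop
  conn_symm : ∀ x y, conn x y → conn y x

/-- A single move of the agent in a system: a traversal inside one instance
(changing only that instance's state), or a free move along a connection. -/
inductive SysStep (G : Gadget) (S : System G) :
    ((S.ι → G.State) × (S.ι × G.Loc)) → ((S.ι → G.State) × (S.ι × G.Loc)) → Prop
  | trav {σg : S.ι → G.State} {i : S.ι} {a b : G.Loc} {s' : G.State} :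
      G.trav (σg i, a) (s', b) →
      SysStep G S (σg, (i, a)) (updState σg i s', (i, b))
  | move {σg : S.ι → G.State} {x y : S.ι × G.Loc} :
      S.conn x y → SysStep G S (σg, x) (σg, y)

/-- `Simulates G' G` : there is a system of copies of `G'`, with external locations
identified (injectively) with the locations of `G` and an injective encoding of the
states of `G` as global states, whose reachability behavior between external locations
in encoded global states is exactly the transitive closure of `G`. -/
def Simulates (G' G : Gadget) : Prop :=
  ∃ S : System G', ∃ ext : G.Loc → S.ι × G'.Loc, ∃ enc : G.State → (S.ι → G'.State),
    Function.Injective ext ∧ Function.Injective enc ∧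
    ∀ s s' a b,
      Relation.ReflTransGen (SysStep G' S) (enc s, ext a) (enc s', ext b) ↔
      Relation.ReflTransGen G.trav (s, a) (s', b)

/-! ### Doors.  State `true` = open, `false` = closed.
A direction flag `true` means the corresponding tunnel is directed,
`false` that it is undirected. -/

/-- Locations of a door with an opening tunnel: entrance/exit of the opening (`O`),
traverse (`T`) and closing (`C`) tunnels. -/
inductive DoorLoc | O0 | O1 | T0 | T1 | C0 | C1
deriving DecidableEq

instance instFintypeDoorLoc : Fintype DoorLoc :=
  Fintype.ofList [DoorLoc.O0, DoorLoc.O1, DoorLoc.T0, DoorLoc.T1, DoorLoc.C0, DoorLoc.C1] (by intro x; cases x <;> decide)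

/-- Traversals of a door with an opening tunnel; `dO`, `dT`, `dC` record whether the
opening, traverse, closing tunnels are directed. -/
def doorTrav (dO dT dC : Bool) : (Bool × DoorLoc) → (Bool × DoorLoc) → Prop := fun x y =>
  (x.2 = DoorLoc.O0 ∧ y = (true, DoorLoc.O1)) ∨
  (dO = false ∧ x.2 = DoorLoc.O1 ∧ y = (true, DoorLoc.O0)) ∨
  (x.1 = true ∧ x.2 = DoorLoc.T0 ∧ y = (true, DoorLoc.T1)) ∨
  (dT = false ∧ x.1 = true ∧ x.2 = DoorLoc.T1 ∧ y = (true, DoorLoc.T0)) ∨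
  (x.2 = DoorLoc.C0 ∧ y = (false, DoorLoc.C1)) ∨
  (dC = false ∧ x.2 = DoorLoc.C1 ∧ y = (false, DoorLoc.C0))

/-- The door with an opening tunnel (an open-required door). -/
def doorGadget (dO dT dC : Bool) : Gadget :=
  ⟨Bool, DoorLoc, inferInstance, inferInstance, doorTrav dO dT dC⟩

/-- Locations of an open-optional door: opening port `O` plus traverse and closing tunnels. -/
inductive ODoorLoc | O | T0 | T1 | C0 | C1
deriving DecidableEq

instance instFintypeODoorLoc : Fintype ODoorLoc :=
  Fintype.ofList [ODoorLoc.O, ODoorLoc.T0, ODoorLoc.T1, ODoorLoc.C0, ODoorLoc.C1] (by intro x; cases x <;> decide)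

/-- Traversals of an open-optional door: a visit to the opening port `O` sets the state
to open; `dT`, `dC` record whether the traverse and closing tunnels are directed. -/
def openOptDoorTrav (dT dC : Bool) : (Bool × ODoorLoc) → (Bool × ODoorLoc) → Prop := fun x y =>
  (x.2 = ODoorLoc.O ∧ y = (true, ODoorLoc.O)) ∨
  (x.1 = true ∧ x.2 = ODoorLoc.T0 ∧ y = (true, ODoorLoc.T1)) ∨
  (dT = false ∧ x.1 = true ∧ x.2 = ODoorLoc.T1 ∧ y = (true, ODoorLoc.T0)) ∨
  (x.2 = ODoorLoc.C0 ∧ y = (false, ODoorLoc.C1)) ∨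
  (dC = false ∧ x.2 = ODoorLoc.C1 ∧ y = (false, ODoorLoc.C0))

/-- The open-optional door. -/
def openOptDoorGadget (dT dC : Bool) : Gadget :=
  ⟨Bool, ODoorLoc, inferInstance, inferInstance, openOptDoorTrav dT dC⟩

/-- A diode: a 1-state gadget with one always-traversable directed tunnel. -/
inductive DiodeLoc | inp | out
deriving DecidableEq

instance instFintypeDiodeLoc : Fintype DiodeLoc :=
  Fintype.ofList [DiodeLoc.inp, DiodeLoc.out] (by intro x; cases x <;> decide)

def diode : Gadget :=
  ⟨Unit, DiodeLoc, inferInstance, inferInstance,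
    fun x y => x.2 = DiodeLoc.inp ∧ y.2 = DiodeLoc.out⟩

/-- Locations of an open-required normal self-closing door. -/
inductive SCDLoc | O0 | O1 | T0 | T1
deriving DecidableEq

instance instFintypeSCDLoc : Fintype SCDLoc :=
  Fintype.ofList [SCDLoc.O0, SCDLoc.O1, SCDLoc.T0, SCDLoc.T1] (by intro x; cases x <;> decide)

/-- Open-required normal self-closing door: opening tunnel `O` (always traversable, sets
the state to open), self-closing tunnel `T` (traversable exactly when open, sets closed). -/
def nSCDTrav (dO dT : Bool) : (Bool × SCDLoc) → (Bool × SCDLoc) → Prop := fun x y =>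
  (x.2 = SCDLoc.O0 ∧ y = (true, SCDLoc.O1)) ∨
  (dO = false ∧ x.2 = SCDLoc.O1 ∧ y = (true, SCDLoc.O0)) ∨
  (x.1 = true ∧ x.2 = SCDLoc.T0 ∧ y = (false, SCDLoc.T1)) ∨
  (dT = false ∧ x.1 = true ∧ x.2 = SCDLoc.T1 ∧ y = (false, SCDLoc.T0))

def nSCD (dO dT : Bool) : Gadget :=
  ⟨Bool, SCDLoc, inferInstance, inferInstance, nSCDTrav dO dT⟩

/-- Locations of an open-optional normal self-closing door. -/
inductive OOSCDLoc | O | T0 | T1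
deriving DecidableEq

instance instFintypeOOSCDLoc : Fintype OOSCDLoc :=
  Fintype.ofList [OOSCDLoc.O, OOSCDLoc.T0, OOSCDLoc.T1] (by intro x; cases x <;> decide)

/-- Open-optional normal self-closing door: opening port `O` (visit sets the state to
open), self-closing tunnel `T` (traversable exactly when open, sets the state closed). -/
def ooSCDTrav (dT : Bool) : (Bool × OOSCDLoc) → (Bool × OOSCDLoc) → Prop := fun x y =>
  (x.2 = OOSCDLoc.O ∧ y = (true, OOSCDLoc.O)) ∨
  (x.1 = true ∧ x.2 = OOSCDLoc.T0 ∧ y = (false, OOSCDLoc.T1)) ∨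
  (dT = false ∧ x.1 = true ∧ x.2 = OOSCDLoc.T1 ∧ y = (false, OOSCDLoc.T0))

def ooSCD (dT : Bool) : Gadget :=
  ⟨Bool, OOSCDLoc, inferInstance, inferInstance, ooSCDTrav dT⟩

/-- Locations of a symmetric self-closing door. -/
inductive SymSCDLoc | A0 | A1 | B0 | B1
deriving DecidableEq

instance instFintypeSymSCDLoc : Fintype SymSCDLoc :=
  Fintype.ofList [SymSCDLoc.A0, SymSCDLoc.A1, SymSCDLoc.B0, SymSCDLoc.B1] (by intro x; cases x <;> decide)

/-- Symmetric self-closing door: self-opening tunnel `A` (traversable exactly when closed,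
sets the state open), self-closing tunnel `B` (traversable exactly when open, sets closed). -/
def symSCDTrav (dA dB : Bool) : (Bool × SymSCDLoc) → (Bool × SymSCDLoc) → Prop := fun x y =>
  (x.1 = false ∧ x.2 = SymSCDLoc.A0 ∧ y = (true, SymSCDLoc.A1)) ∨
  (dA = false ∧ x.1 = false ∧ x.2 = SymSCDLoc.A1 ∧ y = (true, SymSCDLoc.A0)) ∨
  (x.1 = true ∧ x.2 = SymSCDLoc.B0 ∧ y = (false, SymSCDLoc.B1)) ∨
  (dB = false ∧ x.1 = true ∧ x.2 = SymSCDLoc.B1 ∧ y = (false, SymSCDLoc.B0))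

def symSCD (dA dB : Bool) : Gadget :=
  ⟨Bool, SymSCDLoc, inferInstance, inferInstance, symSCDTrav dA dB⟩

/-! A copy of a door whose `O1` is joined to `T0` and whose `T1` is joined to `C0` is already a
diode from `O0` to `C1`: crossing it forwards opens it, passes its traverse tunnel and closes it
again, while an agent entering at `C1` can only close it, after which the traverse tunnel is
blocked. Putting such a guard in front of the entrance and behind the exit of every tunnel of a
central door forces each tunnel to be used forwards only, which realizes the directed door.
Reachability in this system is bounded by a finite invariant that only looks at the central
state, the state of the copy holding the agent and the agent's position. -/

open DoorLoc Relation

inductive Tunnel | opening | traverse | closing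
deriving DecidableEq

instance : Fintype Tunnel :=
  Fintype.ofList [.opening, .traverse, .closing] (by intro t; cases t <;> decide)

namespace Tunnel

def entrance : Tunnel → DoorLoc
  | opening => O0
  | traverse => T0
  | closing => C0

def exit : Tunnel → DoorLoc
  | opening => O1
  | traverse => T1
  | closing => C1

end Tunnel

open Tunnel

theorem DoorLoc.exists_eq_entrance_or_eq_exit :
    ∀ a : DoorLoc, ∃ t : Tunnel, a = t.entrance ∨ a = t.exit := by
  decide

instance (dO dT dC : Bool) (x y : Bool × DoorLoc) : Decidable (doorTrav dO dT dC x y) := by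
  unfold doorTrav; infer_instance

theorem doorTrav_undirected {dO dT dC : Bool} {x y : Bool × DoorLoc}
    (h : doorTrav dO dT dC x y) : doorTrav false false false x y := by
  unfold doorTrav at *; tauto

theorem doorTrav_of_directed {dO dT dC : Bool} {x y : Bool × DoorLoc}
    (h : doorTrav true true true x y) : doorTrav dO dT dC x y := by
  unfold doorTrav at *; tauto

/-- Vacuously: a directed traversal ends at an exit, where no directed traversal starts. -/
instance : IsTrans (Bool × DoorLoc) (doorTrav true true true) := ⟨by decide⟩

theorem exists_tunnel_of_doorTrav_directed :
    ∀ s s' : Bool, ∀ a b : DoorLoc, doorTrav true true true (s, a) (s', b) →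
      ∃ t : Tunnel, a = t.entrance ∧ b = t.exit := by
  decide

inductive Component | center | entryGuard (t : Tunnel) | exitGuard (t : Tunnel)
deriving DecidableEq

instance : Fintype Component :=
  Fintype.ofList (.center :: [.opening, .traverse, .closing].flatMap
      fun t => [.entryGuard t, .exitGuard t])
    (by intro g; rcases g with _ | (_ | _ | _) | (_ | _ | _) <;> decide)

open Component

inductive Wire : Component × DoorLoc → Component × DoorLoc → Prop
  | feed (t : Tunnel) : Wire (entryGuard t, C1) (center, t.entrance)
  | drain (t : Tunnel) : Wire (center, t.exit) (exitGuard t, O0)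
  | guardOpen {g : Component} (hg : g ≠ center) : Wire (g, O1) (g, T0)
  | guardClose {g : Component} (hg : g ≠ center) : Wire (g, T1) (g, C0)

abbrev guardedSystem (dO dT dC : Bool) : System (doorGadget dO dT dC) :=
  ⟨Component, inferInstance, fun x y => Wire x y ∨ Wire y x, fun _ _ => Or.symm⟩

abbrev GuardedStep (dO dT dC : Bool) :
    (Component → Bool) × (Component × DoorLoc) → (Component → Bool) × (Component × DoorLoc) →
      Prop :=
  SysStep (doorGadget dO dT dC) (guardedSystem dO dT dC)

def guardedExt : DoorLoc → Component × DoorLoc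
  | O0 => (entryGuard opening, O0)
  | O1 => (exitGuard opening, C1)
  | T0 => (entryGuard traverse, O0)
  | T1 => (exitGuard traverse, C1)
  | C0 => (entryGuard closing, O0)
  | C1 => (exitGuard closing, C1)

def guardedEnc (s : Bool) : Component → Bool
  | center => s
  | _ => false

theorem guardedExt_injective : Function.Injective guardedExt := by
  decide

theorem guardedEnc_injective : Function.Injective guardedEnc :=
  fun _ _ h => congrFun h center

theorem updState_guardedEnc_center (s s' : Bool) :
    updState (guardedEnc s) center s' = guardedEnc s' := by
  funext j
  cases j <;> simp [updState, guardedEnc]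

section Completeness

variable {dO dT dC : Bool}

theorem guard_crossing {σ : Component → Bool} {g : Component} (hg : g ≠ center)
    (hσ : σ g = false) : ReflTransGen (GuardedStep dO dT dC) (σ, (g, O0)) (σ, (g, C1)) := by
  have hopen : updState σ g true g = true := if_pos rfl
  have hclosed : updState (updState (updState σ g true) g true) g false = σ := by
    funext j
    by_cases hj : j = g <;> simp [updState, hj, hσ]
  have path : ReflTransGen (GuardedStep dO dT dC) (σ, (g, O0))
      (updState (updState (updState σ g true) g true) g false, (g, C1)) :=
    .head (.trav (Or.inl ⟨rfl, rfl⟩)) <|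
    .head (.move (Or.inl (.guardOpen hg))) <|
    .head (.trav (Or.inr (Or.inr (Or.inl ⟨hopen, rfl, rfl⟩)))) <|
    .head (.move (Or.inl (.guardClose hg))) <|
    .single (.trav (Or.inr (Or.inr (Or.inr (Or.inr (Or.inl ⟨rfl, rfl⟩))))))
  rwa [hclosed] at path

theorem guardedStep_center {s s' : Bool} {a b : DoorLoc}
    (h : doorTrav true true true (s, a) (s', b)) :
    GuardedStep dO dT dC (guardedEnc s, (center, a)) (guardedEnc s', (center, b)) := by
  have step : GuardedStep dO dT dC (guardedEnc s, (center, a))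
      (updState (guardedEnc s) center s', (center, b)) := .trav (doorTrav_of_directed h)
  rwa [updState_guardedEnc_center] at step

theorem reach_of_doorTrav {s s' : Bool} (t : Tunnel)
    (h : doorTrav true true true (s, t.entrance) (s', t.exit)) :
    ReflTransGen (GuardedStep dO dT dC) (guardedEnc s, guardedExt t.entrance)
      (guardedEnc s', guardedExt t.exit) := by
  have hin : guardedExt t.entrance = (entryGuard t, O0) := by cases t <;> rfl
  have hout : guardedExt t.exit = (exitGuard t, C1) := by cases t <;> rfl
  rw [hin, hout]
  exact (guard_crossing (g := entryGuard t) nofun rfl).trans <|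
    .head (.move (Or.inl (.feed t))) <|
    .head (guardedStep_center h) <|
    .head (.move (Or.inl (.drain t))) <|
    guard_crossing (g := exitGuard t) nofun rfl

theorem reach_of_reflGen_doorTrav {s s' : Bool} {a b : DoorLoc}
    (h : ReflGen (doorTrav true true true) (s, a) (s', b)) :
    ReflTransGen (GuardedStep dO dT dC) (guardedEnc s, guardedExt a)
      (guardedEnc s', guardedExt b) := by
  rcases h with _ | h
  · exact .refl
  · obtain ⟨t, rfl, rfl⟩ := exists_tunnel_of_doorTrav_directed s s' a b h
    exact reach_of_doorTrav t h

end Completeness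

section Soundness

/-- `c` is the state of the central door and `d` that of the copy holding the agent at `p`; a
wire into another copy has to preserve `I` whatever the state `d'` of that copy. -/
structure LocalInvariant (I : Bool → Bool → Component × DoorLoc → Prop) : Prop where
  trav_center : ∀ c a s' b, I c c (center, a) →
    doorTrav false false false (c, a) (s', b) → I s' s' (center, b)
  trav_guard : ∀ c d g a s' b, g ≠ center → I c d (g, a) →
    doorTrav false false false (d, a) (s', b) → I c s' (g, b)
  feed : ∀ c d d' t, I c d (entryGuard t, C1) ↔ I c d' (center, t.entrance)
  drain : ∀ c d d' t, I c d (center, t.exit) ↔ I c d' (exitGuard t, O0)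
  guard : ∀ c d g, g ≠ center → (I c d (g, O1) ↔ I c d (g, T0)) ∧ (I c d (g, T1) ↔ I c d (g, C0))

variable {I : Bool → Bool → Component × DoorLoc → Prop}

theorem LocalInvariant.trav (hI : LocalInvariant I) {σ : Component → Bool} {i : Component}
    {a b : DoorLoc} {s' : Bool} (h : doorTrav false false false (σ i, a) (s', b))
    (hx : I (σ center) (σ i) (i, a)) : I (updState σ i s' center) (updState σ i s' i) (i, b) := by
  rcases eq_or_ne i center with rfl | hi
  · simpa [updState] using hI.trav_center _ a s' b hx h
  · simpa [updState, hi, hi.symm] using hI.trav_guard _ _ i a s' b hi hx h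

theorem LocalInvariant.wire (hI : LocalInvariant I) (c : Bool) (σ : Component → Bool)
    {p q : Component × DoorLoc} (h : Wire p q) : I c (σ p.1) p ↔ I c (σ q.1) q := by
  cases h with
  | feed t => exact hI.feed _ _ _ t
  | drain t => exact hI.drain _ _ _ t
  | guardOpen hg => exact (hI.guard _ _ _ hg).1
  | guardClose hg => exact (hI.guard _ _ _ hg).2

theorem LocalInvariant.step (hI : LocalInvariant I) {dO dT dC : Bool}
    {x y : (Component → Bool) × (Component × DoorLoc)} (h : GuardedStep dO dT dC x y)
    (hx : I (x.1 center) (x.1 x.2.1) x.2) : I (y.1 center) (y.1 y.2.1) y.2 := by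
  rcases h with @⟨σ, i, a, b, s', h⟩ | @⟨σ, p, q, h | h⟩
  · exact hI.trav (doorTrav_undirected h) hx
  · exact (hI.wire _ σ h).1 hx
  · exact (hI.wire _ σ h).2 hx

theorem LocalInvariant.reach (hI : LocalInvariant I) {dO dT dC : Bool}
    {x y : (Component → Bool) × (Component × DoorLoc)}
    (h : ReflTransGen (GuardedStep dO dT dC) x y)
    (hx : I (x.1 center) (x.1 x.2.1) x.2) : I (y.1 center) (y.1 y.2.1) y.2 := by
  induction h with
  | refl => exact hx
  | tail _ hstep ih => exact hI.step hstep ih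

/-- The positions of a guard in state `d` from which its entrance `O0` is unreachable. -/
def GuardDownstream (d : Bool) (l : DoorLoc) : Prop :=
  l = C1 ∨ d = false ∧ (l = C0 ∨ l = T1)

instance (d : Bool) (l : DoorLoc) : Decidable (GuardDownstream d l) := by
  unfold GuardDownstream; infer_instance

/-- Before the central tunnel `t` is used, the central door is untouched; afterwards it is in the
state produced by the directed traversal of `t`, and the agent can re-enter the entry guard only
in its downstream part. -/
def EntranceInv (s : Bool) (t : Tunnel) (c d : Bool) (p : Component × DoorLoc) : Prop :=
  c = s ∧ (p.1 = entryGuard t ∨ p = (center, t.entrance)) ∨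
  doorTrav true true true (s, t.entrance) (c, t.exit) ∧
    (p = (center, t.entrance) ∨ p = (center, t.exit) ∨ p.1 = exitGuard t ∨
      p.1 = entryGuard t ∧ GuardDownstream d p.2)

instance (s : Bool) (t : Tunnel) (c d : Bool) (p : Component × DoorLoc) :
    Decidable (EntranceInv s t c d p) := by
  unfold EntranceInv; infer_instance

def ExitInv (s : Bool) (t : Tunnel) (c d : Bool) (p : Component × DoorLoc) : Prop :=
  c = s ∧ p.1 = exitGuard t ∧ GuardDownstream d p.2

instance (s : Bool) (t : Tunnel) (c d : Bool) (p : Component × DoorLoc) :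
    Decidable (ExitInv s t c d p) := by
  unfold ExitInv; infer_instance

theorem localInvariant_entranceInv (s : Bool) (t : Tunnel) : LocalInvariant (EntranceInv s t) where
  trav_center := by revert s t; decide
  trav_guard := by revert s t; decide
  feed := by revert s t; decide
  drain := by revert s t; decide
  guard := by revert s t; decide

theorem localInvariant_exitInv (s : Bool) (t : Tunnel) : LocalInvariant (ExitInv s t) where
  trav_center := by revert s t; decide
  trav_guard := by revert s t; decide
  feed := by revert s t; decide
  drain := by revert s t; decide
  guard := by revert s t; decide

theorem entranceInv_start :
    ∀ s t, EntranceInv s t (guardedEnc s center) (guardedEnc s (guardedExt t.entrance).1)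
      (guardedExt t.entrance) := by
  decide

theorem exitInv_start :
    ∀ s t, ExitInv s t (guardedEnc s center) (guardedEnc s (guardedExt t.exit).1)
      (guardedExt t.exit) := by
  decide

theorem doorTrav_of_entranceInv :
    ∀ s t s' b, EntranceInv s t s' (guardedEnc s' (guardedExt b).1) (guardedExt b) →
      (s', b) = (s, t.entrance) ∨ doorTrav true true true (s, t.entrance) (s', b) := by
  decide

theorem eq_of_exitInv :
    ∀ s t s' b, ExitInv s t s' (guardedEnc s' (guardedExt b).1) (guardedExt b) →
      (s', b) = (s, t.exit) := by
  decide

theorem reflGen_doorTrav_of_reach {dO dT dC s s' : Bool} {a b : DoorLoc}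
    (h : ReflTransGen (GuardedStep dO dT dC) (guardedEnc s, guardedExt a)
      (guardedEnc s', guardedExt b)) :
    ReflGen (doorTrav true true true) (s, a) (s', b) := by
  obtain ⟨t, rfl | rfl⟩ := DoorLoc.exists_eq_entrance_or_eq_exit a
  · rcases doorTrav_of_entranceInv s t s' b
      ((localInvariant_entranceInv s t).reach h (entranceInv_start s t)) with h | h
    · exact h ▸ .refl
    · exact .single h
  · rw [eq_of_exitInv s t s' b ((localInvariant_exitInv s t).reach h (exitInv_start s t))]

end Soundness

theorem simulates_directed_door (dO dT dC : Bool) :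
    Simulates (doorGadget dO dT dC) (doorGadget true true true) := by
  refine ⟨guardedSystem dO dT dC, guardedExt, guardedEnc, guardedExt_injective,
    guardedEnc_injective, fun s s' a b => ?_⟩
  change _ ↔ ReflTransGen (doorTrav true true true) (s, a) (s', b)
  rw [reflTransGen_eq_reflGen (r := doorTrav true true true)]
  exact ⟨reflGen_doorTrav_of_reach, reach_of_reflGen_doorTrav⟩

/-- Any door that can simulate a diode can simulate the fully directed
door (the door obtained by directing each of its tunnels); hence every door gadget can
simulate some fully directed door. -/
theorem door_simulating_diode_simulates_directed_door :
    (∀ dO dT dC : Bool, Simulates (doorGadget dO dT dC) diode →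
      Simulates (doorGadget dO dT dC) (doorGadget true true true)) ∧
    (∀ dO dT dC : Bool, Simulates (doorGadget dO dT dC) (doorGadget true true true)) :=
  ⟨fun dO dT dC _ => simulates_directed_door dO dT dC, simulates_directed_door⟩
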